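/- Let K be a field, F ⊆ K⟨X⟩, G ⊆ (F) (the two-sided ideal generated by F), and f ∈ K⟨X⟩ such that f →*_G 0 under standard polynomial reduction with respect to a fixed monomial order. Then, for all labelled quivers Q with labels in X such that all elements of G are both Q-consequences of F and Q-order compatible, the polynomial f is compatible with Q if and only if f is a Q-consequence of F. -/

import Mathlib

open scoped BigOperators

universe u₁ u₂ u₃ u₄ u₅

/-- A labelled quiver: a directed multigraph with edges labelled in `X`. -/
structure LQuiver (V : Type u₁) (E : Type u₂) (X : Type u₃) where
  src : E → V
  tgt : E → V
  lab : E → X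

namespace LQuiver

variable {V : Type u₁} {E : Type u₂} {X : Type u₃}

/-- Paths in the quiver (possibly empty). -/
inductive Walk (Q : LQuiver V E X) : V → V → Type (max u₁ u₂)
  | nil (v : V) : Walk Q v v
  | cons {u : V} (e : E) (p : Walk Q u (Q.src e)) : Walk Q u (Q.tgt e)

/-- The label of a path, a word in the free monoid `⟨X⟩`. -/
def wlabel (Q : LQuiver V E X) : ∀ {u v : V}, Q.Walk u v → FreeMonoid X
  | _, _, .nil _ => 1
  | _, _, .cons e p => FreeMonoid.of (Q.lab e) * Q.wlabel p

/-- The signature `σ(m)` of a monomial (word) `m`. -/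
def sigW (Q : LQuiver V E X) (m : FreeMonoid X) : Set (V × V) :=
  {p : V × V | ∃ w : Q.Walk p.1 p.2, Q.wlabel w = m}

variable {R : Type u₄} [CommRing R]

/-- The signature `σ(f)` of a noncommutative polynomial `f ∈ R⟨X⟩`. -/
def sig (Q : LQuiver V E X) (f : MonoidAlgebra R (FreeMonoid X)) : Set (V × V) :=
  ⋂ m ∈ f.coeff.support, Q.sigW m

/-- A polynomial is compatible with `Q` if its signature is nonempty. -/
def Compatible (Q : LQuiver V E X) (f : MonoidAlgebra R (FreeMonoid X)) : Prop :=
  (Q.sig f).Nonempty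

/-- The projection `s(f)` of `σ(f)` on sources. -/
def srcSet (Q : LQuiver V E X) (f : MonoidAlgebra R (FreeMonoid X)) : Set V :=
  Prod.fst '' Q.sig f

/-- The projection `t(f)` of `σ(f)` on targets. -/
def tgtSet (Q : LQuiver V E X) (f : MonoidAlgebra R (FreeMonoid X)) : Set V :=
  Prod.snd '' Q.sig f

/-- `f` is a `Q`-consequence of `F`. -/
def QConsequence (Q : LQuiver V E X) (F : Set (MonoidAlgebra R (FreeMonoid X)))
    (f : MonoidAlgebra R (FreeMonoid X)) : Prop :=
  Q.Compatible f ∧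
  ∃ (n : ℕ) (g a b : Fin n → MonoidAlgebra R (FreeMonoid X)),
    (∀ i, g i ∈ F) ∧
    f = ∑ i, a i * g i * b i ∧
    ∀ uv ∈ Q.sig f, ∀ i, ∃ ui vi : V,
      (uv.1, ui) ∈ Q.sig (b i) ∧ (ui, vi) ∈ Q.sig (g i) ∧ (vi, uv.2) ∈ Q.sig (a i)

end LQuiver

/-- The monomial `m` regarded as a polynomial in `R⟨X⟩`. -/
noncomputable def mono (R : Type u₄) [CommRing R] {X : Type u₃} (m : FreeMonoid X) :
    MonoidAlgebra R (FreeMonoid X) :=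
  MonoidAlgebra.single m 1

/-- One rewriting step with divisor monomials selected by `DM`. -/
def RewriteStep {R : Type u₄} [CommRing R] {X : Type u₃}
    (G : Set (MonoidAlgebra R (FreeMonoid X)))
    (DM : MonoidAlgebra R (FreeMonoid X) → Set (FreeMonoid X))
    (f h : MonoidAlgebra R (FreeMonoid X)) : Prop :=
  ∃ g ∈ G, ∃ m ∈ DM g, ∃ a b : FreeMonoid X, ∃ lam : R,
    a * m * b ∈ f.coeff.support ∧ h = f + lam • (mono R a * g * mono R b)

/-- A monomial order: a well-founded linear order compatible with multiplication. -/
def IsMonomialOrder {X : Type u₃} (ord : LinearOrder (FreeMonoid X)) : Prop :=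
  WellFounded ord.lt ∧
    ∀ a b m m' : FreeMonoid X, ord.le m m' → ord.le (a * m * b) (a * m' * b)

/-- The leading monomial of a polynomial w.r.t. a linear order on monomials
(defined as `1` for the zero polynomial). -/
noncomputable def LM {K : Type u₄} [CommRing K] {X : Type u₃}
    (ord : LinearOrder (FreeMonoid X)) (f : MonoidAlgebra K (FreeMonoid X)) : FreeMonoid X :=
  letI := ord
  letI : Decidable (f = 0) := Classical.dec _
  if h : f = 0 then 1 else f.coeff.support.max' (Finsupp.support_nonempty_iff.mpr (MonoidAlgebra.coeff_eq_zero.not.mpr h))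

/-- One step of standard polynomial reduction w.r.t. a set `G` and a monomial order. -/
def ReduceStep {K : Type u₄} [Field K] {X : Type u₃} (ord : LinearOrder (FreeMonoid X))
    (G : Set (MonoidAlgebra K (FreeMonoid X)))
    (f h : MonoidAlgebra K (FreeMonoid X)) : Prop :=
  ∃ g ∈ G, g ≠ 0 ∧ ∃ a b : FreeMonoid X,
    a * LM ord g * b ∈ f.coeff.support ∧
    h = f - (f.coeff (a * LM ord g * b) / g.coeff (LM ord g)) • (mono K a * g * mono K b)

/-- `f` is `Q`-order compatible w.r.t. the order `ord`. -/
def QOrderCompatible {V : Type u₁} {E : Type u₂} {X : Type u₃} {K : Type u₄} [CommRing K]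
    (Q : LQuiver V E X) (ord : LinearOrder (FreeMonoid X))
    (f : MonoidAlgebra K (FreeMonoid X)) : Prop :=
  Q.Compatible f ∧ Q.sigW (LM ord f) = Q.sig f

/-- A representation of a labelled quiver. -/
structure QRep (R : Type u₄) [CommRing R] {V : Type u₁} {E : Type u₂} {X : Type u₃}
    (Q : LQuiver V E X) where
  M : V → Type u₅
  [addcg : ∀ v, AddCommGroup (M v)]
  [mod : ∀ v, Module R (M v)]
  φ : (e : E) → M (Q.src e) →ₗ[R] M (Q.tgt e)

attribute [instance] QRep.addcg QRep.mod

namespace QRep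

variable {R : Type u₄} [CommRing R] {V : Type u₁} {E : Type u₂} {X : Type u₃}
  {Q : LQuiver V E X}

/-- The linear map induced by a path. -/
def walkMap (ρ : QRep R Q) : ∀ {u v : V}, Q.Walk u v → (ρ.M u →ₗ[R] ρ.M v)
  | _, _, .nil _ => LinearMap.id
  | _, _, .cons e p => (ρ.φ e).comp (ρ.walkMap p)

/-- The representation is consistent with the labelling: two paths with the same
source, target and label induce the same linear map. -/
def Consistent (ρ : QRep R Q) : Prop :=
  ∀ (u v : V) (p q : Q.Walk u v), Q.wlabel p = Q.wlabel q → ρ.walkMap p = ρ.walkMap q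

/-- The realization `φ_{v,w}(f)` of a polynomial `f` (for a consistent representation and
`(v,w) ∈ σ(f)`, this is the well-defined linear map of the paper). -/
noncomputable def real (ρ : QRep R Q) (v w : V) (f : MonoidAlgebra R (FreeMonoid X)) :
    ρ.M v →ₗ[R] ρ.M w :=
  ∑ m ∈ f.coeff.support, f.coeff m •
    (letI : Decidable (∃ p : Q.Walk v w, Q.wlabel p = m) := Classical.dec _
     if h : ∃ p : Q.Walk v w, Q.wlabel p = m then ρ.walkMap h.choose else 0)

end QRep

/-!
Induct along the reduction `f →*_G 0`. A step `f ↦ f - c • a g b` cancels the monomial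
`a · LM(g) · b` of `f`. Since `σ(LM g) = σ(g)`, every `(u, v) ∈ σ(f)` factors through a pair
of `σ(g)` along paths labelled `b` and `a`, so `σ(f) ⊆ σ(a g b)` and hence
`σ(f) ⊆ σ(f - c • a g b)`. So the representation `∑ aᵢ fᵢ bᵢ` of `f - c • a g b`, whose path
condition holds on `σ(f)`, plus that of `g` multiplied by `c • a` on the left and by `b` on the
right, is a representation of `f` witnessing a `Q`-consequence.
-/

namespace LQuiver

variable {V : Type u₁} {E : Type u₂} {X : Type u₃} {Q : LQuiver V E X}

def Walk.append : ∀ {u w v : V}, Q.Walk u w → Q.Walk w v → Q.Walk u v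
  | _, _, _, p, .nil _ => p
  | _, _, _, p, .cons e q => .cons e (p.append q)

theorem wlabel_append : ∀ {u w v : V} (p : Q.Walk u w) (q : Q.Walk w v),
    Q.wlabel (p.append q) = Q.wlabel q * Q.wlabel p
  | _, _, _, p, .nil _ => by simp [Walk.append, wlabel]
  | _, _, _, p, .cons e q => by simp [Walk.append, wlabel, wlabel_append p q, mul_assoc]

theorem exists_split_of_wlabel_eq_mul : ∀ {u v : V} (p : Q.Walk u v) {m₁ m₂ : FreeMonoid X},
    Q.wlabel p = m₁ * m₂ → ∃ w, (u, w) ∈ Q.sigW m₂ ∧ (w, v) ∈ Q.sigW m₁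
  | _, _, .nil v, m₁, m₂, h => by
    rw [wlabel, eq_comm, mul_eq_one'] at h
    obtain ⟨rfl, rfl⟩ := h
    exact ⟨v, ⟨.nil v, by rw [wlabel]⟩, ⟨.nil v, by rw [wlabel]⟩⟩
  | _, _, .cons e p, m₁, m₂, h => by
    cases m₁ using FreeMonoid.casesOn with
    | one => exact ⟨_, ⟨.cons e p, by rw [h, one_mul]⟩, ⟨.nil _, by rw [wlabel]⟩⟩
    | of_mul x m₁ =>
      rw [mul_assoc, wlabel, ← FreeMonoid.toList.injective.eq_iff, FreeMonoid.toList_of_mul,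
        FreeMonoid.toList_of_mul, List.cons_eq_cons, FreeMonoid.toList.injective.eq_iff] at h
      obtain ⟨w, hw, q, hq⟩ := exists_split_of_wlabel_eq_mul p h.2
      exact ⟨w, hw, ⟨.cons e q, by rw [wlabel, hq, h.1]⟩⟩

theorem mem_sigW_mul {m₁ m₂ : FreeMonoid X} {u v : V} :
    (u, v) ∈ Q.sigW (m₁ * m₂) ↔ ∃ w, (u, w) ∈ Q.sigW m₂ ∧ (w, v) ∈ Q.sigW m₁ := by
  constructor
  · rintro ⟨p, hp⟩
    exact exists_split_of_wlabel_eq_mul p hp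
  · rintro ⟨w, ⟨p, hp⟩, ⟨q, hq⟩⟩
    exact ⟨p.append q, by rw [wlabel_append, hp, hq]⟩

theorem mem_sigW_mul_mul {a m b : FreeMonoid X} {u v : V} :
    (u, v) ∈ Q.sigW (a * m * b) ↔
      ∃ w₁ w₂, (u, w₁) ∈ Q.sigW b ∧ (w₁, w₂) ∈ Q.sigW m ∧ (w₂, v) ∈ Q.sigW a := by
  simp only [mem_sigW_mul]
  exact ⟨fun ⟨w₁, hb, w₂, hm, ha⟩ => ⟨w₁, w₂, hb, hm, ha⟩,
    fun ⟨w₁, w₂, hb, hm, ha⟩ => ⟨w₁, hb, w₂, hm, ha⟩⟩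

variable {R : Type u₄} [CommRing R]

theorem mem_sig {f : MonoidAlgebra R (FreeMonoid X)} {uv : V × V} :
    uv ∈ Q.sig f ↔ ∀ m ∈ f.coeff.support, uv ∈ Q.sigW m := by
  simp [sig]

theorem sig_subset_sig_of_support_subset {f g : MonoidAlgebra R (FreeMonoid X)}
    (h : g.coeff.support ⊆ f.coeff.support) : Q.sig f ⊆ Q.sig g :=
  fun _ huv => mem_sig.mpr fun m hm => mem_sig.mp huv m (h hm)

theorem sig_smul (c : R) (f : MonoidAlgebra R (FreeMonoid X)) : Q.sig f ⊆ Q.sig (c • f) :=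
  sig_subset_sig_of_support_subset (by rw [MonoidAlgebra.coeff_smul]; exact Finsupp.support_smul)

theorem inter_sig_subset_sig_sub (f g : MonoidAlgebra R (FreeMonoid X)) :
    Q.sig f ∩ Q.sig g ⊆ Q.sig (f - g) := by
  classical
  rintro uv ⟨hf, hg⟩
  refine mem_sig.mpr fun m hm => ?_
  rw [MonoidAlgebra.coeff_sub] at hm
  rcases Finset.mem_union.mp (Finsupp.support_sub hm) with hm | hm
  exacts [mem_sig.mp hf m hm, mem_sig.mp hg m hm]

theorem sig_mul {p q : MonoidAlgebra R (FreeMonoid X)} {u w v : V}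
    (hq : (u, w) ∈ Q.sig q) (hp : (w, v) ∈ Q.sig p) : (u, v) ∈ Q.sig (p * q) := by
  classical
  refine mem_sig.mpr fun m hm => ?_
  obtain ⟨m₁, h₁, m₂, h₂, rfl⟩ :=
    Finset.mem_mul.mp (MonoidAlgebra.support_coeff_mul_subset p q hm)
  exact mem_sigW_mul.mpr ⟨w, mem_sig.mp hq _ h₂, mem_sig.mp hp _ h₁⟩

theorem sig_mono [Nontrivial R] (m : FreeMonoid X) : Q.sig (mono R m) = Q.sigW m := by
  have : (mono R m).coeff.support = {m} := Finsupp.support_single m one_ne_zero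
  simp [sig, this]

def IsQCombination (Q : LQuiver V E X) (F : Set (MonoidAlgebra R (FreeMonoid X)))
    (S : Set (V × V)) (f : MonoidAlgebra R (FreeMonoid X)) : Prop :=
  ∃ (n : ℕ) (g a b : Fin n → MonoidAlgebra R (FreeMonoid X)),
    (∀ i, g i ∈ F) ∧
    f = ∑ i, a i * g i * b i ∧
    ∀ uv ∈ S, ∀ i, ∃ ui vi : V,
      (uv.1, ui) ∈ Q.sig (b i) ∧ (ui, vi) ∈ Q.sig (g i) ∧ (vi, uv.2) ∈ Q.sig (a i)

theorem qConsequence_iff {F : Set (MonoidAlgebra R (FreeMonoid X))}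
    {f : MonoidAlgebra R (FreeMonoid X)} :
    Q.QConsequence F f ↔ Q.Compatible f ∧ Q.IsQCombination F (Q.sig f) f :=
  Iff.rfl

namespace IsQCombination

variable {F : Set (MonoidAlgebra R (FreeMonoid X))} {S T : Set (V × V)}
  {f g : MonoidAlgebra R (FreeMonoid X)}

theorem zero : Q.IsQCombination F S 0 :=
  ⟨0, Fin.elim0, Fin.elim0, Fin.elim0, fun i => i.elim0, by simp, fun _ _ i => i.elim0⟩

theorem of_subset (hST : S ⊆ T) (hf : Q.IsQCombination F T f) : Q.IsQCombination F S f := by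
  obtain ⟨n, g, a, b, hgF, rfl, hpath⟩ := hf
  exact ⟨n, g, a, b, hgF, rfl, fun uv huv => hpath uv (hST huv)⟩

theorem add (hf : Q.IsQCombination F S f) (hg : Q.IsQCombination F S g) :
    Q.IsQCombination F S (f + g) := by
  obtain ⟨n, g₁, a₁, b₁, hF₁, rfl, hpath₁⟩ := hf
  obtain ⟨k, g₂, a₂, b₂, hF₂, rfl, hpath₂⟩ := hg
  refine ⟨n + k, Fin.addCases g₁ g₂, Fin.addCases a₁ a₂, Fin.addCases b₁ b₂,
    Fin.addCases (by simpa using hF₁) (by simpa using hF₂), by simp [Fin.sum_univ_add], ?_⟩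
  intro uv huv i
  induction i using Fin.addCases with
  | left i => simpa using hpath₁ uv huv i
  | right i => simpa using hpath₂ uv huv i

theorem mul_mul {p q : MonoidAlgebra R (FreeMonoid X)} (hg : Q.IsQCombination F T g)
    (hS : ∀ uv ∈ S, ∃ w₁ w₂,
      (uv.1, w₁) ∈ Q.sig q ∧ (w₁, w₂) ∈ T ∧ (w₂, uv.2) ∈ Q.sig p) :
    Q.IsQCombination F S (p * g * q) := by
  obtain ⟨n, g', a, b, hF, rfl, hpath⟩ := hg
  refine ⟨n, g', fun i => p * a i, fun i => b i * q, hF, ?_, fun uv huv i => ?_⟩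
  · simp only [Finset.mul_sum, Finset.sum_mul, mul_assoc]
  · obtain ⟨w₁, w₂, hq, hw, hp⟩ := hS uv huv
    obtain ⟨ui, vi, hb, hgi, ha⟩ := hpath (w₁, w₂) hw i
    exact ⟨ui, vi, sig_mul hq hb, hgi, sig_mul ha hp⟩

end IsQCombination

section Reduction

variable {K : Type u₄} [Field K] {ord : LinearOrder (FreeMonoid X)}
  {F G : Set (MonoidAlgebra K (FreeMonoid X))} {f h : MonoidAlgebra K (FreeMonoid X)}

theorem IsQCombination.of_reduceStep
    (hG : ∀ g ∈ G, Q.sigW (LM ord g) = Q.sig g ∧ Q.IsQCombination F (Q.sig g) g)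
    (hstep : ReduceStep ord G f h) (hh : Q.IsQCombination F (Q.sig h) h) :
    Q.IsQCombination F (Q.sig f) f := by
  obtain ⟨g, hgG, -, a, b, hsupp, rfl⟩ := hstep
  obtain ⟨hLM, hg⟩ := hG g hgG
  set c := f.coeff (a * LM ord g * b) / g.coeff (LM ord g)
  have hfactor : ∀ uv ∈ Q.sig f, ∃ w₁ w₂, (uv.1, w₁) ∈ Q.sig (mono K b) ∧
      (w₁, w₂) ∈ Q.sig g ∧ (w₂, uv.2) ∈ Q.sig (c • mono K a) := by
    intro uv huv
    obtain ⟨w₁, w₂, hb, hm, ha⟩ := mem_sigW_mul_mul.mp (mem_sig.mp huv _ hsupp)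
    rw [← sig_mono (R := K)] at ha hb
    exact ⟨w₁, w₂, hb, hLM ▸ hm, sig_smul c _ ha⟩
  have hreduced : Q.sig f ⊆ Q.sig (f - c • mono K a * g * mono K b) := fun uv huv =>
    have ⟨_, _, hb, hg, ha⟩ := hfactor uv huv
    inter_sig_subset_sig_sub _ _ ⟨huv, sig_mul hb (sig_mul hg ha)⟩
  rw [← smul_mul_assoc, ← smul_mul_assoc] at hh
  simpa only [sub_add_cancel] using (hh.of_subset hreduced).add (hg.mul_mul hfactor)

theorem IsQCombination.of_reflTransGen_reduceStep
    (hG : ∀ g ∈ G, Q.sigW (LM ord g) = Q.sig g ∧ Q.IsQCombination F (Q.sig g) g)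
    (hred : Relation.ReflTransGen (ReduceStep ord G) f 0) : Q.IsQCombination F (Q.sig f) f := by
  induction hred using Relation.ReflTransGen.head_induction_on with
  | refl => exact .zero
  | head hstep _ ih => exact .of_reduceStep hG hstep ih

end Reduction

end LQuiver

theorem reduction_crit_general {X K : Type*} [Field K]
    (ord : LinearOrder (FreeMonoid X))
    (F G : Set (MonoidAlgebra K (FreeMonoid X)))
    (f : MonoidAlgebra K (FreeMonoid X))
    (hred : Relation.ReflTransGen (ReduceStep ord G) f 0) :
    ∀ {V E : Type*} (Q : LQuiver V E X),
      (∀ g ∈ G, Q.QConsequence F g ∧ QOrderCompatible Q ord g) →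
      (Q.Compatible f ↔ Q.QConsequence F f) := by
  intro V E Q hG
  refine ⟨fun hf => LQuiver.qConsequence_iff.mpr ⟨hf, ?_⟩, fun hf => hf.1⟩
  refine LQuiver.IsQCombination.of_reflTransGen_reduceStep (fun g hg => ?_) hred
  obtain ⟨hcons, -, hLM⟩ := hG g hg
  exact ⟨hLM, (LQuiver.qConsequence_iff.mp hcons).2⟩

/-- if `G ⊆ (F)` and `f →*_G 0`, then for every quiver `Q` such that all
elements of `G` are `Q`-consequences of `F` and `Q`-order compatible, `f` is compatible
with `Q` iff `f` is a `Q`-consequence of `F`. -/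
theorem reduction_crit {X K : Type*} [Field K]
    (ord : LinearOrder (FreeMonoid X)) (hord : IsMonomialOrder ord)
    (F G : Set (MonoidAlgebra K (FreeMonoid X)))
    (hGF : ∀ g ∈ G, ∃ (n : ℕ) (a b f' : Fin n → MonoidAlgebra K (FreeMonoid X)),
      (∀ i, f' i ∈ F) ∧ g = ∑ i, a i * f' i * b i)
    (f : MonoidAlgebra K (FreeMonoid X))
    (hred : Relation.ReflTransGen (ReduceStep ord G) f 0) :
    ∀ {V E : Type*} (Q : LQuiver V E X),
      (∀ g ∈ G, Q.QConsequence F g ∧ QOrderCompatible Q ord g) →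
      (Q.Compatible f ↔ Q.QConsequence F f) :=
  reduction_crit_general ord F G f hred
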